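/- Let V₁, V₂ be finite-dimensional real vector spaces, ρ₁ : SO(3) → GL(V₁) and ρ₂ : SO(3) → GL(V₂) group homomorphisms, μ a Borel measure on S² invariant under the SO(3) action, κ : S² → Hom(V₁,V₂) continuous, and f : S² → V₁ continuous. Define the convolution (κ ⋆ f) : SO(3) → V₂ by (κ ⋆ f)(R) = ∫_{S²} ρ₂(R) κ(R⁻¹x) ρ₁(R)⁻¹ f(x) dμ(x). Then this convolution is equivariant: for every S ∈ SO(3) and every R ∈ SO(3), (κ ⋆ (π₁(S)f))(R) = ρ₂(S)·(κ ⋆ f)(S⁻¹R), where [π₁(S)f](x) = ρ₁(S) f(S⁻¹x). -/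

import Mathlib

/-!
Substitute `x = S y` in the integral defining `(κ ⋆ π₁(S)f)(S T)`, which the invariance of `μ`
allows. The integrand becomes `ρ₂(S)` applied to the integrand of `(κ ⋆ f)(T)`, and `ρ₂(S)`,
an automorphism of a finite-dimensional space, commutes with the Bochner integral.
-/

open Matrix MeasureTheory

noncomputable section

/-- `SO(n)`: the group of `n×n` real orthogonal matrices with determinant `1`, as a subgroup
of the orthogonal group. -/
def SO (n : ℕ) : Subgroup (Matrix.orthogonalGroup (Fin n) ℝ) where
  carrier := {R | (R : Matrix (Fin n) (Fin n) ℝ).det = 1}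
  one_mem' := by simp
  mul_mem' := by
    intro a b ha hb
    simp only [Set.mem_setOf_eq, Matrix.UnitaryGroup.mul_val, Matrix.det_mul] at *
    rw [ha, hb, mul_one]
  inv_mem' := by
    intro a ha
    simp only [Set.mem_setOf_eq, Matrix.UnitaryGroup.inv_val] at *
    rw [Matrix.star_eq_conjTranspose, Matrix.conjTranspose_eq_transpose_of_trivial,
      Matrix.det_transpose]
    exact ha

/-- The matrix underlying an element of `SO(n)`. -/
def SO.mat {n : ℕ} (R : SO n) : Matrix (Fin n) (Fin n) ℝ := R.1.1

/-- The unit sphere `S²` in three-dimensional Euclidean space. -/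
abbrev Sphere2 : Type := Metric.sphere (0 : EuclideanSpace ℝ (Fin 3)) 1

theorem norm_mulVec (R : SO 3) (x : EuclideanSpace ℝ (Fin 3)) :
    ‖(show EuclideanSpace ℝ (Fin 3) from WithLp.toLp 2 ((SO.mat R).mulVec x))‖ = ‖x‖ := by
  have horth : star (SO.mat R) * SO.mat R = 1 := R.1.2.1
  have h : (SO.mat R)ᵀ * SO.mat R = 1 := by
    rwa [Matrix.star_eq_conjTranspose, Matrix.conjTranspose_eq_transpose_of_trivial] at horth
  rw [EuclideanSpace.norm_eq, EuclideanSpace.norm_eq]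
  congr 1
  try simp only [WithLp.ofLp_toLp]
  have hd : ∀ (w : Fin 3 → ℝ), (∑ i, ‖w i‖ ^ 2) = w ⬝ᵥ w := by
    intro w
    simp [dotProduct, Real.norm_eq_abs, sq_abs, pow_two]
  rw [hd ((SO.mat R).mulVec x), hd x]
  rw [Matrix.dotProduct_mulVec]
  congr 1
  calc ((SO.mat R).mulVec x) ᵥ* SO.mat R = (SO.mat R)ᵀ *ᵥ ((SO.mat R) *ᵥ x) := by
        rw [Matrix.mulVec_transpose]
  _ = ((SO.mat R)ᵀ * SO.mat R) *ᵥ x := by rw [Matrix.mulVec_mulVec]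
  _ = x := by rw [h, Matrix.one_mulVec]

/-- The action of `SO(3)` on the unit sphere `S²` by matrix-vector multiplication. -/
def SO.act (R : SO 3) (x : Sphere2) : Sphere2 :=
  ⟨WithLp.toLp 2 ((SO.mat R).mulVec x), by
    rw [mem_sphere_zero_iff_norm]
    exact (norm_mulVec R x).trans (mem_sphere_zero_iff_norm.mp x.2)⟩

variable {V₁ V₂ : Type*}
  [NormedAddCommGroup V₁] [NormedSpace ℝ V₁] [FiniteDimensional ℝ V₁]
  [NormedAddCommGroup V₂] [NormedSpace ℝ V₂] [FiniteDimensional ℝ V₂]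

/-- The spherical convolution `(κ ⋆ f)(R) = ∫_{S²} ρ₂(R) κ(R⁻¹x) ρ₁(R)⁻¹ f(x) dμ(x)` of a
kernel `κ : S² → Hom(V₁,V₂)` with a feature map `f : S² → V₁`, producing a function on
`SO(3)`. -/
def sphereConv (ρ₁ : SO 3 →* LinearMap.GeneralLinearGroup ℝ V₁)
    (ρ₂ : SO 3 →* LinearMap.GeneralLinearGroup ℝ V₂) (μ : Measure Sphere2)
    (κ : Sphere2 → (V₁ →ₗ[ℝ] V₂)) (f : Sphere2 → V₁) (R : SO 3) : V₂ :=
  ∫ x, (ρ₂ R : V₂ →ₗ[ℝ] V₂) (κ (SO.act R⁻¹ x) ((↑(ρ₁ R)⁻¹ : V₁ →ₗ[ℝ] V₁) (f x))) ∂μ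

namespace SO

lemma act_mul (a b : SO 3) (x : Sphere2) : act (a * b) x = act a (act b x) := by
  apply Subtype.ext
  show WithLp.toLp 2 ((mat (a * b)).mulVec x) = WithLp.toLp 2 ((mat a).mulVec ((mat b).mulVec x))
  rw [Matrix.mulVec_mulVec]
  rfl

lemma act_one (x : Sphere2) : act 1 x = x := by
  apply Subtype.ext
  show WithLp.toLp 2 ((1 : Matrix (Fin 3) (Fin 3) ℝ).mulVec x) = (x : EuclideanSpace ℝ (Fin 3))
  rw [Matrix.one_mulVec]

@[simp]
lemma act_inv_act (R : SO 3) (x : Sphere2) : act R⁻¹ (act R x) = x := by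
  rw [← act_mul, inv_mul_cancel, act_one]

lemma continuous_act (R : SO 3) : Continuous (act R) := by
  unfold act
  fun_prop

def actHomeomorph (R : SO 3) : Sphere2 ≃ₜ Sphere2 where
  toFun := act R
  invFun := act R⁻¹
  left_inv := act_inv_act R
  right_inv x := by rw [← act_mul, mul_inv_cancel, act_one]
  continuous_toFun := continuous_act R
  continuous_invFun := continuous_act R⁻¹

end SO

@[simp]
theorem LinearMap.GeneralLinearGroup.inv_apply_apply {R M : Type*} [Semiring R] [AddCommMonoid M]
    [Module R M] (g : GeneralLinearGroup R M) (v : M) :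
    (↑g⁻¹ : M →ₗ[R] M) ((g : M →ₗ[R] M) v) = v :=
  LinearMap.congr_fun g.inv_mul v

theorem LinearMap.GeneralLinearGroup.integral_comp_comm {X E : Type*} [MeasurableSpace X]
    {μ : Measure X} [NormedAddCommGroup E] [NormedSpace ℝ E] [FiniteDimensional ℝ E]
    (g : LinearMap.GeneralLinearGroup ℝ E) (φ : X → E) :
    ∫ x, (g : E →ₗ[ℝ] E) (φ x) ∂μ = (g : E →ₗ[ℝ] E) (∫ x, φ x ∂μ) :=
  (generalLinearEquiv ℝ E g).toContinuousLinearEquiv.integral_comp_comm φ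

theorem integral_comp_act_of_map_eq {E : Type*} [NormedAddCommGroup E] [NormedSpace ℝ E]
    {μ : Measure Sphere2} {R : SO 3} (hμ : μ.map (SO.act R) = μ) (g : Sphere2 → E) :
    ∫ x, g (SO.act R x) ∂μ = ∫ x, g x ∂μ :=
  MeasurePreserving.integral_comp' (f := (SO.actHomeomorph R).toMeasurableEquiv)
    ⟨(SO.continuous_act R).measurable, hμ⟩ g

theorem sphereConv_equivariant_general
    (ρ₁ : SO 3 →* LinearMap.GeneralLinearGroup ℝ V₁)
    (ρ₂ : SO 3 →* LinearMap.GeneralLinearGroup ℝ V₂)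
    (μ : Measure Sphere2) (hμ : ∀ R : SO 3, μ.map (SO.act R) = μ)
    (κ : Sphere2 → (V₁ →ₗ[ℝ] V₂))
    (f : Sphere2 → V₁) (S R : SO 3) :
    sphereConv ρ₁ ρ₂ μ κ
        (fun x => (ρ₁ S : V₁ →ₗ[ℝ] V₁) (f (SO.act S⁻¹ x))) R =
      (ρ₂ S : V₂ →ₗ[ℝ] V₂) (sphereConv ρ₁ ρ₂ μ κ f (S⁻¹ * R)) := by
  obtain ⟨T, rfl⟩ : ∃ T, R = S * T := ⟨S⁻¹ * R, (mul_inv_cancel_left S R).symm⟩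
  rw [inv_mul_cancel_left, sphereConv, sphereConv, ← integral_comp_act_of_map_eq (hμ S),
    ← LinearMap.GeneralLinearGroup.integral_comp_comm]
  congr 1 with y
  simp only [_root_.mul_inv_rev, SO.act_mul, SO.act_inv_act, map_mul, Units.val_mul,
    Module.End.mul_apply, LinearMap.GeneralLinearGroup.inv_apply_apply]

/-- Equivariance of the spherical convolution with `𝒳 = S²` and `𝒴 = SO(3)`: for an
`SO(3)`-invariant Borel measure `μ` on `S²`, a continuous kernel `κ` and a continuous feature
map `f`, one has `(κ ⋆ (π₁(S)f))(R) = ρ₂(S)·(κ ⋆ f)(S⁻¹R)`, where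
`[π₁(S)f](x) = ρ₁(S) f(S⁻¹x)`. -/
theorem sphereConv_equivariant
    (ρ₁ : SO 3 →* LinearMap.GeneralLinearGroup ℝ V₁)
    (ρ₂ : SO 3 →* LinearMap.GeneralLinearGroup ℝ V₂)
    (μ : Measure Sphere2) (hμ : ∀ R : SO 3, μ.map (SO.act R) = μ)
    (κ : Sphere2 → (V₁ →ₗ[ℝ] V₂)) (hκ : Continuous fun x => ⇑(κ x))
    (f : Sphere2 → V₁) (hf : Continuous f) (S R : SO 3) :
    sphereConv ρ₁ ρ₂ μ κ
        (fun x => (ρ₁ S : V₁ →ₗ[ℝ] V₁) (f (SO.act S⁻¹ x))) R =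
      (ρ₂ S : V₂ →ₗ[ℝ] V₂) (sphereConv ρ₁ ρ₂ μ κ f (S⁻¹ * R)) :=
  sphereConv_equivariant_general ρ₁ ρ₂ μ hμ κ f S R

end
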